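/- Let D ⊆ ℝⁿ be a nonempty (possibly infinite) set of nonzero vectors contained in a linear subspace L ⊆ ℝⁿ. Then pspan(D) = L if and only if for every nonzero vector v ∈ L there exists d ∈ D with ⟨v, d⟩ > 0. -/

import Mathlib

/-!
Viewing `D` inside `L`, it suffices to treat `L` as the whole space. If every nonzero `v` pairs
positively with some `d ∈ D`, the inner dual of the cone `pspan D` is trivial, so by Farkas' lemma
`pspan D` is dense; a dense convex subset of a finite-dimensional space has nonempty interior (its
affine span is closed, hence everything) and is therefore the whole space. Conversely, a nonzero
`v ∈ pspan D` with `⟪v, d⟫ ≤ 0` for all `d ∈ D` would satisfy `⟪v, v⟫ ≤ 0`.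
-/

open scoped RealInnerProductSpace

noncomputable section

def pspan {E : Type*} [AddCommGroup E] [Module ℝ E] (D : Set E) : Set E :=
  {x | ∃ (k : ℕ) (d : Fin k → E) (c : Fin k → ℝ),
    (∀ i, d i ∈ D) ∧ (∀ i, 0 ≤ c i) ∧ x = ∑ i, c i • d i}

noncomputable def cmRel {E : Type*} [NormedAddCommGroup E] [InnerProductSpace ℝ E]
    (L : Submodule ℝ E) (D : Set E) : ℝ :=
  sInf ((fun u => sSup ((fun d => ⟪u, d⟫ / ‖d‖) '' D)) '' {u : E | u ∈ L ∧ ‖u‖ = 1})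

noncomputable def cVRel {E : Type*} [NormedAddCommGroup E] [InnerProductSpace ℝ E]
    (L : Submodule ℝ E) (D : Set E) : Set E :=
  {u : E | u ∈ L ∧ ‖u‖ = 1 ∧ sSup ((fun d => ⟪u, d⟫ / ‖d‖) '' D) = cmRel L D}

open Set

section Module

variable {E F : Type*} [AddCommGroup E] [Module ℝ E] [AddCommGroup F] [Module ℝ F]

lemma pspan_eq_hull (D : Set E) : pspan D = PointedCone.hull ℝ D := by
  ext x
  rw [SetLike.mem_coe, Submodule.mem_span_set']
  constructor
  · rintro ⟨k, d, c, hd, hc, rfl⟩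
    exact ⟨k, fun i => ⟨c i, hc i⟩, fun i => ⟨d i, hd i⟩, rfl⟩
  · rintro ⟨k, c, d, rfl⟩
    exact ⟨k, fun i => d i, fun i => c i, fun i => (d i).2, fun i => (c i).2, rfl⟩

lemma convex_pspan (D : Set E) : Convex ℝ (pspan D) := by
  rw [pspan_eq_hull]
  exact (PointedCone.hull ℝ D).convex

lemma pspan_image (f : E →ₗ[ℝ] F) (D : Set E) : pspan (f '' D) = f '' pspan D := by
  ext x
  constructor
  · rintro ⟨k, d, c, hd, hc, rfl⟩
    choose e he hfe using hd
    exact ⟨∑ i, c i • e i, ⟨k, e, c, he, hc, rfl⟩, by simp [hfe]⟩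
  · rintro ⟨_, ⟨k, d, c, hd, hc, rfl⟩, rfl⟩
    exact ⟨k, f ∘ d, c, fun i => mem_image_of_mem f (hd i), hc, by simp⟩

end Module

theorem Convex.eq_univ_of_dense {E : Type*} [NormedAddCommGroup E] [NormedSpace ℝ E]
    [FiniteDimensional ℝ E] {s : Set E} (hs : Convex ℝ s) (hd : Dense s) : s = univ := by
  have hspan : affineSpan ℝ s = ⊤ := by
    refine eq_top_iff.2 fun x _ => ?_
    have hcl : closure s ⊆ affineSpan ℝ s :=
      closure_minimal (subset_affineSpan ℝ s) (affineSpan ℝ s).closed_of_finiteDimensional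
    exact hcl (hd.closure_eq ▸ mem_univ x)
  have hint : (interior s).Nonempty := by
    rw [← hs.convexHull_eq]
    exact interior_convexHull_nonempty_iff_affineSpan_eq_top.2 hspan
  have hinterior := hs.interior_closure_eq_interior_of_nonempty_interior hint
  rw [hd.closure_eq, interior_univ] at hinterior
  exact eq_univ_of_univ_subset (hinterior ▸ interior_subset)

section InnerProductSpace

variable {E : Type*} [NormedAddCommGroup E] [InnerProductSpace ℝ E] {D : Set E}

lemma inner_nonpos_of_mem_pspan {v x : E} (hv : ∀ d ∈ D, ⟪v, d⟫ ≤ 0) (hx : x ∈ pspan D) :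
    ⟪v, x⟫ ≤ 0 := by
  obtain ⟨k, d, c, hd, hc, rfl⟩ := hx
  rw [inner_sum]
  refine Finset.sum_nonpos fun i _ => ?_
  rw [real_inner_smul_right]
  exact mul_nonpos_of_nonneg_of_nonpos (hc i) (hv _ (hd i))

lemma dense_pspan_of_forall_exists_inner_pos [CompleteSpace E]
    (h : ∀ v ≠ 0, ∃ d ∈ D, 0 < ⟪v, d⟫) : Dense (pspan D) := by
  intro x
  by_contra hx
  let K : ProperCone ℝ E := Submodule.closure (PointedCone.hull ℝ D)
  obtain ⟨y, hyK, hxy⟩ := K.hyperplane_separation' (x₀ := x)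
    fun hxK => hx (by rw [pspan_eq_hull]; exact hxK)
  have hy : -y ≠ 0 := by
    rintro hy
    rw [neg_eq_zero.1 hy, inner_zero_right] at hxy
    exact hxy.false
  obtain ⟨d, hd, hyd⟩ := h (-y) hy
  have hdy := hyK d (subset_closure (PointedCone.subset_hull hd))
  rw [inner_neg_left, real_inner_comm] at hyd
  linarith

theorem pspan_eq_univ_iff [FiniteDimensional ℝ E] :
    pspan D = univ ↔ ∀ v ≠ 0, ∃ d ∈ D, 0 < ⟪v, d⟫ := by
  refine ⟨fun hD v hv => ?_, fun h => ?_⟩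
  · by_contra! hneg
    exact hv (real_inner_self_nonpos.1 (inner_nonpos_of_mem_pspan hneg (hD ▸ mem_univ v)))
  · exact (convex_pspan D).eq_univ_of_dense (dense_pspan_of_forall_exists_inner_pos h)

theorem pspan_eq_submodule_iff [FiniteDimensional ℝ E] {L : Submodule ℝ E}
    (hDL : D ⊆ L) : pspan D = L ↔ ∀ v ∈ L, v ≠ 0 → ∃ d ∈ D, 0 < ⟪v, d⟫ := by
  set D' : Set L := L.subtype ⁻¹' D
  have hD : D = L.subtype '' D' := (image_preimage_eq_of_subset (by simpa using hDL)).symm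
  have hL : (L : Set E) = L.subtype '' univ := by simp
  rw [hD, pspan_image, hL, L.injective_subtype.image_injective.eq_iff, pspan_eq_univ_iff]
  simp only [D', ne_eq, Subtype.forall, mem_preimage, Submodule.subtype_apply,
    Submodule.coe_inner, Submodule.mk_eq_zero, mem_image, Subtype.exists, exists_and_right,
    exists_eq_right]

end InnerProductSpace

theorem stmt7_general {n : ℕ} (D : Set (EuclideanSpace ℝ (Fin n)))
    (L : Submodule ℝ (EuclideanSpace ℝ (Fin n)))
    (hDL : D ⊆ (L : Set (EuclideanSpace ℝ (Fin n)))) :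
    pspan D = (L : Set (EuclideanSpace ℝ (Fin n))) ↔
      ∀ v ∈ L, v ≠ 0 → ∃ d ∈ D, 0 < ⟪v, d⟫ :=
  pspan_eq_submodule_iff hDL

theorem stmt7 {n : ℕ} (D : Set (EuclideanSpace ℝ (Fin n))) (hne : D.Nonempty)
    (h0 : (0 : EuclideanSpace ℝ (Fin n)) ∉ D)
    (L : Submodule ℝ (EuclideanSpace ℝ (Fin n)))
    (hDL : D ⊆ (L : Set (EuclideanSpace ℝ (Fin n)))) :
    pspan D = (L : Set (EuclideanSpace ℝ (Fin n))) ↔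
      ∀ v ∈ L, v ≠ 0 → ∃ d ∈ D, 0 < ⟪v, d⟫ :=
  stmt7_general D L hDL
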